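/- Pathwise uniqueness for the two-particle repulsive SDE: if (X₁, X₂) and (Y₁, Y₂) are two continuous solutions of dX_j = dB_j + (β/2) dt/(X_j − X_{3−j}) on [0, τ] driven by the same Brownian motions, with the same initial condition X₁(0) = Y₁(0) < X₂(0) = Y₂(0), β ≥ 1, and both solutions maintain X₁ < X₂ and Y₁ < Y₂ on [0, τ], then X = Y on [0, τ]. -/

import Mathlib

/-!
The drift cancels in the centre of mass `X₁ + X₂`, which is therefore the same explicit
function of `B₁ + B₂` for both solutions. The gap `U = X₂ - X₁` solves
`U t = U 0 + (B₂ - B₁) t + β ∫₀ᵗ 1 / U`, so the noise drops out of the difference `D = U - V`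
of the gaps of two solutions: `D` is differentiable with `D' = β (1 / U - 1 / V)`, which has
the sign of `-D` because `x ↦ 1 / x` is decreasing on `(0, ∞)`. Hence `D²` is antitone, and it
vanishes at time `0`.
-/

open Real intervalIntegral
open Set Filter Topology

theorem eqOn_zero_of_eq_primitive_of_mul_nonpos {D g : ℝ → ℝ} {a b : ℝ}
    (hg : ContinuousOn g (Icc a b)) (hD : ∀ t ∈ Icc a b, D t = ∫ s in a..t, g s)
    (hDg : ∀ t ∈ Ioo a b, D t * g t ≤ 0) : EqOn D 0 (Icc a b) := by
  intro t ht
  have hab : a ≤ b := ht.1.trans ht.2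
  have hDc : ContinuousOn D (Icc a b) := by
    have hprim := continuousOn_primitive_interval (μ := MeasureTheory.volume)
      (uIcc_of_le hab ▸ hg.integrableOn_Icc)
    rw [uIcc_of_le hab] at hprim
    exact hprim.congr hD
  have hD' : ∀ x ∈ Ioo a b, HasDerivAt D (g x) x := by
    intro x hx
    have hnhds : Icc a b ∈ 𝓝 x := Icc_mem_nhds hx.1 hx.2
    have hprim := integral_hasDerivAt_right
      ((hg.mono (Icc_subset_Icc_right hx.2.le)).intervalIntegrable_of_Icc hx.1.le)
      ((hg.mono Ioo_subset_Icc_self).stronglyMeasurableAtFilter isOpen_Ioo x hx)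
      (hg.continuousAt hnhds)
    exact hprim.congr_of_eventuallyEq (eventuallyEq_of_mem hnhds hD)
  have hanti : AntitoneOn (fun x => D x ^ 2) (Icc a b) := by
    refine antitoneOn_of_hasDerivWithinAt_nonpos (f' := fun x => 2 * (D x * g x))
      (convex_Icc a b) (hDc.pow 2) (fun x hx => ?_) (fun x hx => ?_)
    · rw [interior_Icc] at hx ⊢
      exact ((hD' x hx).fun_pow 2).hasDerivWithinAt.congr_deriv (by ring)
    · rw [interior_Icc] at hx
      linarith [hDg x hx]
  have hDa : D a = 0 := by simpa using hD a (left_mem_Icc.2 hab)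
  have hDt : D t ^ 2 ≤ 0 := by simpa [hDa] using hanti (left_mem_Icc.2 hab) ht ht.1
  exact pow_eq_zero_iff two_ne_zero |>.1 (le_antisymm hDt (sq_nonneg _))

theorem sub_mul_one_div_sub_one_div_nonpos {u v : ℝ} (hu : 0 < u) (hv : 0 < v) :
    (u - v) * (1 / u - 1 / v) ≤ 0 := by
  have h : (u - v) * (1 / u - 1 / v) = -((u - v) ^ 2 / (u * v)) := by
    field_simp
    ring
  rw [h]
  exact neg_nonpos.2 (by positivity)

theorem eqOn_of_eq_add_integral_one_div {U V W : ℝ → ℝ} {a b c : ℝ} (hc : 0 ≤ c)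
    (hUc : ContinuousOn U (Icc a b)) (hVc : ContinuousOn V (Icc a b))
    (hUpos : ∀ t ∈ Icc a b, 0 < U t) (hVpos : ∀ t ∈ Icc a b, 0 < V t) (ha : U a = V a)
    (hU : ∀ t ∈ Icc a b, U t = U a + W t + c * ∫ s in a..t, 1 / U s)
    (hV : ∀ t ∈ Icc a b, V t = V a + W t + c * ∫ s in a..t, 1 / V s) :
    EqOn U V (Icc a b) := by
  have hUi : ContinuousOn (fun s => 1 / U s) (Icc a b) :=
    continuousOn_const.div hUc fun s hs => (hUpos s hs).ne'
  have hVi : ContinuousOn (fun s => 1 / V s) (Icc a b) :=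
    continuousOn_const.div hVc fun s hs => (hVpos s hs).ne'
  have hD : EqOn (U - V) 0 (Icc a b) := by
    refine eqOn_zero_of_eq_primitive_of_mul_nonpos (g := fun s => c * (1 / U s - 1 / V s))
      (continuousOn_const.mul (hUi.sub hVi)) (fun t ht => ?_) (fun t ht => ?_)
    · have hsub : Icc a t ⊆ Icc a b := Icc_subset_Icc_right ht.2
      rw [integral_const_mul, integral_sub ((hUi.mono hsub).intervalIntegrable_of_Icc ht.1)
        ((hVi.mono hsub).intervalIntegrable_of_Icc ht.1), Pi.sub_apply, hU t ht, hV t ht, ha]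
      ring
    · calc (U - V) t * (c * (1 / U t - 1 / V t))
          = c * ((U t - V t) * (1 / U t - 1 / V t)) := by rw [Pi.sub_apply]; ring
        _ ≤ 0 := mul_nonpos_of_nonneg_of_nonpos hc <| sub_mul_one_div_sub_one_div_nonpos
          (hUpos t (Ioo_subset_Icc_self ht)) (hVpos t (Ioo_subset_Icc_self ht))
  exact fun t ht => sub_eq_zero.1 (hD ht)

theorem integral_one_div_sub_swap (f g : ℝ → ℝ) (a b : ℝ) :
    ∫ s in a..b, 1 / (f s - g s) = -∫ s in a..b, 1 / (g s - f s) := by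
  rw [← integral_neg]
  congr 1
  funext s
  rw [← neg_sub (g s), one_div_neg_eq_neg_one_div]

section TwoParticles

variable {β a t : ℝ} {B₁ B₂ X₁ X₂ : ℝ → ℝ}

theorem add_eq_of_two_particle_eq
    (h₁ : X₁ t = X₁ a + B₁ t + (β / 2) * ∫ s in a..t, 1 / (X₁ s - X₂ s))
    (h₂ : X₂ t = X₂ a + B₂ t + (β / 2) * ∫ s in a..t, 1 / (X₂ s - X₁ s)) :
    X₁ t + X₂ t = X₁ a + X₂ a + (B₁ t + B₂ t) := by
  rw [h₁, h₂, integral_one_div_sub_swap]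
  ring

theorem gap_eq_of_two_particle_eq
    (h₁ : X₁ t = X₁ a + B₁ t + (β / 2) * ∫ s in a..t, 1 / (X₁ s - X₂ s))
    (h₂ : X₂ t = X₂ a + B₂ t + (β / 2) * ∫ s in a..t, 1 / (X₂ s - X₁ s)) :
    (X₂ - X₁) t = (X₂ - X₁) a + (B₂ - B₁) t + β * ∫ s in a..t, 1 / (X₂ - X₁) s := by
  simp only [Pi.sub_apply]
  rw [h₁, h₂, integral_one_div_sub_swap]
  ring

end TwoParticles

theorem dyson_two_particle_pathwise_uniqueness_general (β τ : ℝ) (hβ : 1 ≤ β)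
    (B₁ B₂ X₁ X₂ Y₁ Y₂ : ℝ → ℝ)
    (hX₁c : ContinuousOn X₁ (Set.Icc 0 τ)) (hX₂c : ContinuousOn X₂ (Set.Icc 0 τ))
    (hY₁c : ContinuousOn Y₁ (Set.Icc 0 τ)) (hY₂c : ContinuousOn Y₂ (Set.Icc 0 τ))
    (hordX : ∀ t ∈ Set.Icc (0:ℝ) τ, X₁ t < X₂ t)
    (hordY : ∀ t ∈ Set.Icc (0:ℝ) τ, Y₁ t < Y₂ t)
    (hinit₁ : X₁ 0 = Y₁ 0) (hinit₂ : X₂ 0 = Y₂ 0)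
    (hX₁ : ∀ t ∈ Set.Icc (0:ℝ) τ,
      X₁ t = X₁ 0 + B₁ t + (β / 2) * ∫ s in (0:ℝ)..t, 1 / (X₁ s - X₂ s))
    (hX₂ : ∀ t ∈ Set.Icc (0:ℝ) τ,
      X₂ t = X₂ 0 + B₂ t + (β / 2) * ∫ s in (0:ℝ)..t, 1 / (X₂ s - X₁ s))
    (hY₁ : ∀ t ∈ Set.Icc (0:ℝ) τ,
      Y₁ t = Y₁ 0 + B₁ t + (β / 2) * ∫ s in (0:ℝ)..t, 1 / (Y₁ s - Y₂ s))
    (hY₂ : ∀ t ∈ Set.Icc (0:ℝ) τ,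
      Y₂ t = Y₂ 0 + B₂ t + (β / 2) * ∫ s in (0:ℝ)..t, 1 / (Y₂ s - Y₁ s)) :
    ∀ t ∈ Set.Icc (0:ℝ) τ, X₁ t = Y₁ t ∧ X₂ t = Y₂ t := by
  intro t ht
  have hgap : (X₂ - X₁) t = (Y₂ - Y₁) t :=
    eqOn_of_eq_add_integral_one_div (zero_le_one.trans hβ) (hX₂c.sub hX₁c) (hY₂c.sub hY₁c)
      (fun s hs => sub_pos.2 (hordX s hs)) (fun s hs => sub_pos.2 (hordY s hs))
      (by simp only [Pi.sub_apply, hinit₁, hinit₂])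
      (fun s hs => gap_eq_of_two_particle_eq (hX₁ s hs) (hX₂ s hs))
      (fun s hs => gap_eq_of_two_particle_eq (hY₁ s hs) (hY₂ s hs)) ht
  have hsum : X₁ t + X₂ t = Y₁ t + Y₂ t := by
    rw [add_eq_of_two_particle_eq (hX₁ t ht) (hX₂ t ht),
      add_eq_of_two_particle_eq (hY₁ t ht) (hY₂ t ht), hinit₁, hinit₂]
  simp only [Pi.sub_apply] at hgap
  constructor <;> linarith

/-- Pathwise uniqueness for the two-particle repulsive (Dyson) SDE with `β ≥ 1`:
two ordered continuous solutions driven by the same Brownian paths and with the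
same initial condition coincide on `[0, τ]`. -/
theorem dyson_two_particle_pathwise_uniqueness (β τ : ℝ) (hβ : 1 ≤ β) (hτ : 0 < τ)
    (B₁ B₂ X₁ X₂ Y₁ Y₂ : ℝ → ℝ)
    (hX₁c : ContinuousOn X₁ (Set.Icc 0 τ)) (hX₂c : ContinuousOn X₂ (Set.Icc 0 τ))
    (hY₁c : ContinuousOn Y₁ (Set.Icc 0 τ)) (hY₂c : ContinuousOn Y₂ (Set.Icc 0 τ))
    (hordX : ∀ t ∈ Set.Icc (0:ℝ) τ, X₁ t < X₂ t)
    (hordY : ∀ t ∈ Set.Icc (0:ℝ) τ, Y₁ t < Y₂ t)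
    (hinit₁ : X₁ 0 = Y₁ 0) (hinit₂ : X₂ 0 = Y₂ 0) (hinit : X₁ 0 < X₂ 0)
    (hX₁ : ∀ t ∈ Set.Icc (0:ℝ) τ,
      X₁ t = X₁ 0 + B₁ t + (β / 2) * ∫ s in (0:ℝ)..t, 1 / (X₁ s - X₂ s))
    (hX₂ : ∀ t ∈ Set.Icc (0:ℝ) τ,
      X₂ t = X₂ 0 + B₂ t + (β / 2) * ∫ s in (0:ℝ)..t, 1 / (X₂ s - X₁ s))
    (hY₁ : ∀ t ∈ Set.Icc (0:ℝ) τ,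
      Y₁ t = Y₁ 0 + B₁ t + (β / 2) * ∫ s in (0:ℝ)..t, 1 / (Y₁ s - Y₂ s))
    (hY₂ : ∀ t ∈ Set.Icc (0:ℝ) τ,
      Y₂ t = Y₂ 0 + B₂ t + (β / 2) * ∫ s in (0:ℝ)..t, 1 / (Y₂ s - Y₁ s)) :
    ∀ t ∈ Set.Icc (0:ℝ) τ, X₁ t = Y₁ t ∧ X₂ t = Y₂ t :=
  dyson_two_particle_pathwise_uniqueness_general β τ hβ B₁ B₂ X₁ X₂ Y₁ Y₂ hX₁c hX₂c hY₁c hY₂c hordX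
    hordY hinit₁ hinit₂ hX₁ hX₂ hY₁ hY₂
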